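/- Let H ≤ Γ be countable groups, let H act on a countable set Y, and let Γ ↷ X be the induced action. Let Σ ≤ H be a subgroup acting freely on Y. If K ≤ Γ is a subgroup such that (⋃_{g∈Γ} gKg⁻¹) ∩ H ⊆ ⋃_{h∈H} hΣh⁻¹, then the restriction K ↷ X is free. -/

import Mathlib

/-!
A point `[y, g]` of the induced space is fixed by `γ` exactly when `g γ g⁻¹` lies in `H` and
fixes `y`. So if a non-trivial `k ∈ K` had a fixed point, `g k g⁻¹` would be a non-trivial
element of `H` conjugate into `K`; by hypothesis it is `H`-conjugate to some `σ ∈ Σ`, and `σ`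
would fix a point of `Y`, contradicting freeness of `Σ ↷ Y`.
-/

/-- `C` is a Følner sequence for the action of `G` on `X` given by `π`. -/
def IsFolnerSeq {G X : Type*} [Group G] (π : G →* Equiv.Perm X) (C : ℕ → Set X) : Prop :=
  (∀ n, (C n).Finite ∧ (C n).Nonempty) ∧
    ∀ g : G, Filter.Tendsto
      (fun n => ((symmDiff (C n) (π g '' C n)).ncard : ℝ) / (C n).ncard)
      Filter.atTop (nhds 0)

/-- The action of `G` on `X` given by `π` is amenable (admits a Følner sequence). -/
def IsAmenableAction {G X : Type*} [Group G] (π : G →* Equiv.Perm X) : Prop :=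
  ∃ C : ℕ → Set X, IsFolnerSeq π C

/-- The action given by `π` has infinite orbits. -/
def HasInfiniteOrbits {G X : Type*} [Group G] (π : G →* Equiv.Perm X) : Prop :=
  ∀ x : X, {y : X | ∃ g : G, π g x = y}.Infinite

/-- The action given by `π` is transitive. -/
def IsTransitiveAction {G X : Type*} [Group G] (π : G →* Equiv.Perm X) : Prop :=
  ∀ x y : X, ∃ g : G, π g x = y

/-- The action given by `π` is almost free: every non-trivial element has finitely many
fixed points. -/
def IsAlmostFreeAction {G X : Type*} [Group G] (π : G →* Equiv.Perm X) : Prop :=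
  ∀ g : G, g ≠ 1 → {x : X | π g x = x}.Finite

/-- The class 𝒜 of countable groups admitting a faithful, transitive and amenable action
on an infinite countable set. -/
def InClassA (G : Type*) [Group G] : Prop :=
  ∃ (X : Type) (_ : Countable X) (_ : Infinite X) (π : G →* Equiv.Perm X),
    Function.Injective π ∧ IsTransitiveAction π ∧ IsAmenableAction π

/-- The class 𝒜_ℱ of countable groups admitting an amenable, almost free action with
infinite orbits on a countable set. -/
def InClassAF (G : Type*) [Group G] : Prop :=
  ∃ (X : Type) (_ : Countable X) (π : G →* Equiv.Perm X),
    IsAmenableAction π ∧ IsAlmostFreeAction π ∧ HasInfiniteOrbits π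
section InducedAction

variable {Γ : Type*} [Group Γ] (H : Subgroup Γ) {Y : Type*} (π : H →* Equiv.Perm Y)

/-- The equivalence relation on `Y × Γ` given by the diagonal `H`-action
`h • (y, g) = (h • y, h * g)`. -/
def indSetoid : Setoid (Y × Γ) where
  r p q := ∃ h : H, π h p.1 = q.1 ∧ (h : Γ) * p.2 = q.2
  iseqv := by
    constructor
    · intro p
      exact ⟨1, by simp, by simp⟩
    · rintro p q ⟨h, h1, h2⟩
      refine ⟨h⁻¹, ?_, ?_⟩
      · rw [← h1]; simp
      · rw [← h2]; simp [mul_assoc]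
    · rintro p q r ⟨h, h1, h2⟩ ⟨k, k1, k2⟩
      refine ⟨k * h, ?_, ?_⟩
      · rw [← k1, ← h1]; simp
      · rw [← k2, ← h2]; simp [mul_assoc]

/-- The underlying set `X = H \ (Y × Γ)` of the induced action. -/
def IndSpace : Type _ := Quotient (indSetoid H π)

/-- The induced action of `Γ` on `X = H \ (Y × Γ)`, given by `γ • [y, g] = [y, g * γ⁻¹]`. -/
def indHom : Γ →* Equiv.Perm (IndSpace H π) where
  toFun γ :=
    { toFun := Quotient.map' (fun p => (p.1, p.2 * γ⁻¹))
        (by rintro p q ⟨h, h1, h2⟩; exact ⟨h, h1, by show (h : Γ) * (p.2 * _) = q.2 * _; rw [← h2, mul_assoc]⟩)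
      invFun := Quotient.map' (fun p => (p.1, p.2 * γ))
        (by rintro p q ⟨h, h1, h2⟩; exact ⟨h, h1, by show (h : Γ) * (p.2 * _) = q.2 * _; rw [← h2, mul_assoc]⟩)
      left_inv := by
        intro x
        induction x using Quotient.inductionOn' with
        | h p => simp [Quotient.map'_mk'', mul_assoc]; rfl
      right_inv := by
        intro x
        induction x using Quotient.inductionOn' with
        | h p => simp [Quotient.map'_mk'', mul_assoc]; rfl }
  map_one' := by
    apply Equiv.ext
    intro x
    induction x using Quotient.inductionOn' with
    | h p => change Quotient.mk'' _ = Quotient.mk'' _; simp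
  map_mul' γ₁ γ₂ := by
    apply Equiv.ext
    intro x
    induction x using Quotient.inductionOn' with
    | h p => change Quotient.mk'' _ = Quotient.mk'' _; simp [mul_assoc]

end InducedAction

theorem MonoidHom.perm_conj_apply_eq_self_iff {G Y : Type*} [Group G] (π : G →* Equiv.Perm Y)
    (a b : G) (y : Y) : π (a⁻¹ * b * a) (π a⁻¹ y) = π a⁻¹ y ↔ π b y = y := by
  simp only [map_mul, map_inv, Equiv.Perm.mul_apply, Equiv.Perm.coe_inv, Equiv.apply_symm_apply,
    EmbeddingLike.apply_eq_iff_eq]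

section InducedAction

variable {Γ : Type*} [Group Γ] (H : Subgroup Γ) {Y : Type*} (π : H →* Equiv.Perm Y)

theorem indHom_mk_eq_self_iff {γ : Γ} {y : Y} {g : Γ} :
    indHom H π γ (Quotient.mk'' (y, g)) = Quotient.mk'' (y, g) ↔
      ∃ h : H, (h : Γ) = g * γ * g⁻¹ ∧ π h y = y := by
  change (Quotient.mk'' (y, g * γ⁻¹) : Quotient (indSetoid H π)) = Quotient.mk'' (y, g) ↔ _
  rw [Quotient.eq'']
  refine exists_congr fun h => ?_
  rw [and_comm, ← eq_mul_inv_iff_mul_eq, mul_inv_rev, inv_inv, mul_assoc]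

end InducedAction

theorem induced_action_free_general
    {Γ Y : Type*} [Group Γ]
    (H : Subgroup Γ) (π : H →* Equiv.Perm Y)
    (Sig : Subgroup Γ)
    (hfree : ∀ h : H, (h : Γ) ∈ Sig → h ≠ 1 → ∀ y : Y, π h y ≠ y)
    (K : Subgroup Γ)
    (hcond : ∀ x : Γ, x ∈ H → (∃ g : Γ, g⁻¹ * x * g ∈ K) →
       ∃ h : Γ, h ∈ H ∧ h⁻¹ * x * h ∈ Sig) :
    ∀ k : Γ, k ∈ K → k ≠ 1 → ∀ x : IndSpace H π, indHom H π k x ≠ x := by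
  rintro k hk hk1 ⟨y, g⟩ hx
  obtain ⟨h, hh, hy⟩ := (indHom_mk_eq_self_iff H π).1 hx
  obtain ⟨c, hcH, hcSig⟩ := hcond h h.2 ⟨g, by simpa [hh, mul_assoc] using hk⟩
  have hh_ne : h ≠ 1 := fun h1 => hk1 <| conj_eq_one_iff.1 <| by
    rw [← hh, h1, OneMemClass.coe_one]
  let c' : H := ⟨c, hcH⟩
  have hconj_ne : c'⁻¹ * h * c' ≠ 1 := by
    simpa only [inv_inv] using (conj_eq_one_iff (a := c'⁻¹)).not.2 hh_ne
  exact hfree _ hcSig hconj_ne _ ((MonoidHom.perm_conj_apply_eq_self_iff π c' h y).2 hy)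

/-- **Lemma 2.5 (6).**  Let `H ≤ Γ` be countable groups, `H ↷ Y` an action on a countable
set and `Γ ↷ X` the induced action.  Let `Σ ≤ H` be a subgroup acting freely on `Y`.  If
`K ≤ Γ` is a subgroup with `(⋃_{g ∈ Γ} gKg⁻¹) ∩ H ⊆ ⋃_{h ∈ H} hΣh⁻¹`, then the
restriction `K ↷ X` of the induced action is free. -/
theorem induced_action_free
    {Γ Y : Type*} [Group Γ] [Countable Γ] [Countable Y]
    (H : Subgroup Γ) (π : H →* Equiv.Perm Y)
    (Sig : Subgroup Γ) (hsub : Sig ≤ H)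
    (hfree : ∀ h : H, (h : Γ) ∈ Sig → h ≠ 1 → ∀ y : Y, π h y ≠ y)
    (K : Subgroup Γ)
    (hcond : ∀ x : Γ, x ∈ H → (∃ g : Γ, g⁻¹ * x * g ∈ K) →
       ∃ h : Γ, h ∈ H ∧ h⁻¹ * x * h ∈ Sig) :
    ∀ k : Γ, k ∈ K → k ≠ 1 → ∀ x : IndSpace H π, indHom H π k x ≠ x :=
  induced_action_free_general H π Sig hfree K hcond
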